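/- arXiv:1803.04547 — 3 statements merged into one kernel-verified Lean document; each statement's English description precedes it below -/
import Mathlib

section
/- Let Z, Y ∈ ℝ^{n×k} have orthonormal columns and let Π_Z = Z Zᵀ and Π_Y = Y Yᵀ be the corresponding orthogonal projection matrices. Then min over k×k orthogonal matrices Q of ‖Z − Y Q‖_F is at most ‖Π_Z − Π_Y‖_F. -/
/-!
Put `M = Yᵀ Z` and pick an orthogonal `Q` maximizing `tr (Qᵀ M)` over the compact orthogonal
group. Testing the maximality of `S = Qᵀ M` against Householder reflections and plane rotations
shows that `S` is symmetric positive semidefinite, and `S ≤ 1` because `S` is a product of two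
contractions; hence `tr (S²) ≤ tr S`. On the other hand
`‖Z − Y Q‖_F² = 2k − 2 tr S` and `‖ZZᵀ − YYᵀ‖_F² = 2k − 2 tr (MᵀM) = 2k − 2 tr (S²)`.
-/

open Matrix

noncomputable section

/-- Frobenius norm of a real matrix. -/
def frob {m n : Type*} [Fintype m] [Fintype n] (M : Matrix m n ℝ) : ℝ :=
  Real.sqrt (∑ i, ∑ j, (M i j) ^ 2)

open scoped MatrixOrder ComplexOrder in
lemma trace_mul_nonneg_of_posSemidef {ι 𝕜 : Type*} [Fintype ι] [DecidableEq ι] [RCLike 𝕜]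
    {A B : Matrix ι ι 𝕜} (hA : A.PosSemidef) (hB : B.PosSemidef) : 0 ≤ trace (A * B) := by
  have hsqrt : (CFC.sqrt A).IsHermitian := (CFC.sqrt_nonneg A).posSemidef.isHermitian
  have key := (hB.mul_mul_conjTranspose_same (CFC.sqrt A)).trace_nonneg
  rwa [hsqrt.eq, trace_mul_cycle, CFC.sqrt_mul_sqrt_self A hA.nonneg] at key

lemma trace_mul_self_le_trace {ι : Type*} [Fintype ι] [DecidableEq ι] {S : Matrix ι ι ℝ}
    (hS : S.PosSemidef) (h1S : (1 - S).PosSemidef) : trace (S * S) ≤ trace S := by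
  have h := trace_mul_nonneg_of_posSemidef hS h1S
  rw [Matrix.mul_sub, Matrix.mul_one, trace_sub] at h
  linarith

section Isometry

variable {m ι : Type*} [Fintype m] [Fintype ι]

lemma frob_eq_sqrt_trace (X : Matrix m ι ℝ) : frob X = Real.sqrt (trace (Xᵀ * X)) := by
  rw [frob, Finset.sum_comm]
  simp only [trace, diag, mul_apply, transpose_apply, sq]

lemma dotProduct_self_nonneg (x : ι → ℝ) : 0 ≤ x ⬝ᵥ x :=
  Finset.sum_nonneg fun i _ => mul_self_nonneg (x i)

lemma trace_vecMulVec_mul (a b : ι → ℝ) (S : Matrix ι ι ℝ) :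
    trace (vecMulVec a b * S) = b ⬝ᵥ (S *ᵥ a) := by
  rw [vecMulVec_mul, trace_vecMulVec, dotProduct_comm, dotProduct_mulVec]

variable [DecidableEq ι] {A B : Matrix m ι ℝ}

lemma transpose_mul_self_mul_eq_one (hA : Aᵀ * A = 1) {R : Matrix ι ι ℝ} (hR : Rᵀ * R = 1) :
    (A * R)ᵀ * (A * R) = 1 := by
  rw [transpose_mul, Matrix.mul_assoc, ← Matrix.mul_assoc Aᵀ, hA, Matrix.one_mul, hR]

lemma mulVec_dotProduct_mulVec_self (hA : Aᵀ * A = 1) (x : ι → ℝ) :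
    (A *ᵥ x) ⬝ᵥ (A *ᵥ x) = x ⬝ᵥ x := by
  rw [dotProduct_mulVec, vecMul_mulVec, hA, vecMul_one]

lemma dotProduct_transpose_mul_mulVec_le (hA : Aᵀ * A = 1) (hB : Bᵀ * B = 1) (x : ι → ℝ) :
    x ⬝ᵥ ((Bᵀ * A) *ᵥ x) ≤ x ⬝ᵥ x := by
  have hdiff := dotProduct_self_nonneg (B *ᵥ x - A *ᵥ x)
  have hBA : x ⬝ᵥ ((Bᵀ * A) *ᵥ x) = (B *ᵥ x) ⬝ᵥ (A *ᵥ x) := by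
    rw [← mulVec_mulVec, dotProduct_mulVec, vecMul_transpose]
  simp only [sub_dotProduct, dotProduct_sub, mulVec_dotProduct_mulVec_self hA,
    mulVec_dotProduct_mulVec_self hB, dotProduct_comm (A *ᵥ x)] at hdiff
  linarith

lemma trace_transpose_mul_self_sub (hA : Aᵀ * A = 1) (hB : Bᵀ * B = 1) :
    trace ((A - B)ᵀ * (A - B)) = 2 * Fintype.card ι - 2 * trace (Bᵀ * A) := by
  have hAB : trace (Aᵀ * B) = trace (Bᵀ * A) := by
    rw [← trace_transpose, transpose_mul, transpose_transpose]
  simp only [transpose_sub, Matrix.sub_mul, Matrix.mul_sub, trace_sub, hA, hB, hAB, trace_one]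
  ring

lemma trace_transpose_mul_self_sub_mul_transpose (hA : Aᵀ * A = 1) (hB : Bᵀ * B = 1) :
    trace ((A * Aᵀ - B * Bᵀ)ᵀ * (A * Aᵀ - B * Bᵀ))
      = 2 * Fintype.card ι - 2 * trace ((Bᵀ * A)ᵀ * (Bᵀ * A)) := by
  have hproj : ∀ {C D : Matrix m ι ℝ},
      trace (C * Cᵀ * (D * Dᵀ)) = trace ((Dᵀ * C)ᵀ * (Dᵀ * C)) := by
    intro C D
    rw [transpose_mul, transpose_transpose, Matrix.mul_assoc, trace_mul_comm, Matrix.mul_assoc,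
      Matrix.mul_assoc, Matrix.mul_assoc]
  simp only [transpose_sub, transpose_mul, transpose_transpose, Matrix.sub_mul, Matrix.mul_sub,
    trace_sub, hproj, hA, hB, transpose_one, Matrix.mul_one, trace_one]
  rw [trace_mul_comm (Bᵀ * A)]
  ring

lemma posSemidef_one_sub_transpose_mul (hA : Aᵀ * A = 1) (hB : Bᵀ * B = 1)
    (hBA : (Bᵀ * A).IsHermitian) : (1 - Bᵀ * A).PosSemidef := by
  refine .of_dotProduct_mulVec_nonneg (isHermitian_one.sub hBA) fun x => ?_
  simpa [sub_mulVec, dotProduct_sub] using dotProduct_transpose_mul_mulVec_le hA hB x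

lemma frob_sub_le_frob_mul_transpose_sub (hA : Aᵀ * A = 1) (hB : Bᵀ * B = 1)
    (hBA : (Bᵀ * A).PosSemidef) : frob (A - B) ≤ frob (A * Aᵀ - B * Bᵀ) := by
  have hsymm : (Bᵀ * A)ᵀ = Bᵀ * A := by
    simpa [conjTranspose_eq_transpose_of_trivial] using hBA.isHermitian.eq
  have hle :=
    trace_mul_self_le_trace hBA (posSemidef_one_sub_transpose_mul hA hB hBA.isHermitian)
  rw [frob_eq_sqrt_trace, frob_eq_sqrt_trace, trace_transpose_mul_self_sub hA hB,
    trace_transpose_mul_self_sub_mul_transpose hA hB, hsymm]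
  gcongr

end Isometry

section Orthogonal

variable {ι : Type*} [DecidableEq ι]

def planeRotation (u v : ι → ℝ) (c s : ℝ) : Matrix ι ι ℝ :=
  1 + (c - 1) • (vecMulVec u u + vecMulVec v v) + s • (vecMulVec u v - vecMulVec v u)

lemma transpose_planeRotation (u v : ι → ℝ) (c s : ℝ) :
    (planeRotation u v c s)ᵀ = planeRotation u v c (-s) := by
  simp only [planeRotation, transpose_add, transpose_smul, transpose_one, transpose_sub,
    transpose_vecMulVec]
  module

variable [Fintype ι]

lemma planeRotation_transpose_mul_self {u v : ι → ℝ} (hu : u ⬝ᵥ u = 1) (hv : v ⬝ᵥ v = 1)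
    (huv : u ⬝ᵥ v = 0) {c s : ℝ} (hcs : c ^ 2 + s ^ 2 = 1) :
    (planeRotation u v c s)ᵀ * planeRotation u v c s = 1 := by
  have hvu : v ⬝ᵥ u = 0 := by rwa [dotProduct_comm]
  rw [transpose_planeRotation]
  simp only [planeRotation, Matrix.add_mul, Matrix.mul_add, Matrix.sub_mul, Matrix.mul_sub,
    Matrix.one_mul, Matrix.mul_one, smul_mul_smul, vecMulVec_mul_vecMulVec, hu, hv, huv, hvu,
    one_smul, zero_smul, vecMulVec_zero]
  linear_combination (norm := module) hcs • (vecMulVec u u + vecMulVec v v)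

lemma trace_transpose_planeRotation_mul (u v : ι → ℝ) (c s : ℝ) (S : Matrix ι ι ℝ) :
    trace ((planeRotation u v c s)ᵀ * S) = trace S
      + (c - 1) * (u ⬝ᵥ (S *ᵥ u) + v ⬝ᵥ (S *ᵥ v)) + s * (u ⬝ᵥ (S *ᵥ v) - v ⬝ᵥ (S *ᵥ u)) := by
  rw [transpose_planeRotation, planeRotation]
  simp only [Matrix.add_mul, Matrix.sub_mul, Matrix.one_mul, smul_mul_assoc, trace_add, trace_sub,
    trace_smul, trace_vecMulVec_mul, smul_eq_mul]
  ring

def householder (x : ι → ℝ) : Matrix ι ι ℝ := 1 - (2 / (x ⬝ᵥ x)) • vecMulVec x x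

lemma transpose_householder (x : ι → ℝ) : (householder x)ᵀ = householder x := by
  simp [householder]

lemma householder_mul_self {x : ι → ℝ} (hx : x ⬝ᵥ x ≠ 0) :
    householder x * householder x = 1 := by
  have hc : 2 / (x ⬝ᵥ x) * (2 / (x ⬝ᵥ x)) * (x ⬝ᵥ x) = 2 / (x ⬝ᵥ x) + 2 / (x ⬝ᵥ x) := by
    field_simp; ring
  simp only [householder, Matrix.sub_mul, Matrix.mul_sub, Matrix.one_mul, Matrix.mul_one,
    smul_mul_smul, vecMulVec_mul_vecMulVec, vecMulVec_smul, smul_smul, hc, add_smul]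
  abel

lemma trace_householder_mul (x : ι → ℝ) (S : Matrix ι ι ℝ) :
    trace (householder x * S) = trace S - 2 / (x ⬝ᵥ x) * (x ⬝ᵥ (S *ᵥ x)) := by
  rw [householder, Matrix.sub_mul, Matrix.one_mul, smul_mul_assoc, trace_sub, trace_smul,
    trace_vecMulVec_mul, smul_eq_mul]

lemma isCompact_setOf_transpose_mul_self_eq_one :
    IsCompact {Q : Matrix ι ι ℝ | Qᵀ * Q = 1} := by
  refine (isCompact_univ_pi fun _ => isCompact_univ_pi fun _ => isCompact_Icc (a := -1) (b := 1))
    |>.of_isClosed_subset (isClosed_eq (by fun_prop) continuous_const)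
      fun (Q : Matrix ι ι ℝ) (hQ : Qᵀ * Q = 1) i _ j _ => ?_
  have hU : Q ∈ unitaryGroup ι ℝ := by
    rwa [mem_unitaryGroup_iff', star_eq_conjTranspose, conjTranspose_eq_transpose_of_trivial]
  exact abs_le.mp (entry_norm_bound_of_unitary hU i j)

lemma exists_transpose_mul_self_eq_one_forall_trace_le (M : Matrix ι ι ℝ) :
    ∃ Q : Matrix ι ι ℝ, Qᵀ * Q = 1 ∧
      ∀ R : Matrix ι ι ℝ, Rᵀ * R = 1 → trace (Rᵀ * M) ≤ trace (Qᵀ * M) := by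
  obtain ⟨Q, hQ, hmax⟩ := isCompact_setOf_transpose_mul_self_eq_one.exists_isMaxOn
    ⟨1, by simp⟩ (f := fun Q : Matrix ι ι ℝ => trace (Qᵀ * M)) (by fun_prop)
  exact ⟨Q, hQ, fun R hR => hmax hR⟩

end Orthogonal

lemma eq_zero_of_forall_sq_add_sq_eq_one {a b : ℝ}
    (h : ∀ c s : ℝ, c ^ 2 + s ^ 2 = 1 → (c - 1) * a + s * b ≤ 0) : b = 0 := by
  by_contra hb
  have hr : 0 < a ^ 2 + b ^ 2 := by positivity
  set r := Real.sqrt (a ^ 2 + b ^ 2)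
  have hr0 : 0 < r := Real.sqrt_pos.mpr hr
  have hrr : r ^ 2 = a ^ 2 + b ^ 2 := Real.sq_sqrt hr.le
  have key := h (a / r) (b / r) (by field_simp; linarith)
  have hra : r ≤ a := by
    have : (a / r - 1) * a + b / r * b = r - a := by field_simp; linarith
    linarith
  nlinarith [sq_pos_of_ne_zero hb]

section MaximalTrace

variable {ι : Type*} [Fintype ι] [DecidableEq ι] {S : Matrix ι ι ℝ}

lemma dotProduct_mulVec_nonneg_of_forall_trace_le
    (h : ∀ R : Matrix ι ι ℝ, Rᵀ * R = 1 → trace (Rᵀ * S) ≤ trace S) (x : ι → ℝ) :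
    0 ≤ x ⬝ᵥ (S *ᵥ x) := by
  rcases eq_or_ne (x ⬝ᵥ x) 0 with hx | hx
  · simp [dotProduct_self_eq_zero.mp hx]
  have hle := h (householder x) (by rw [transpose_householder, householder_mul_self hx])
  rw [transpose_householder, trace_householder_mul] at hle
  exact nonneg_of_mul_nonneg_right (by linarith)
    (div_pos two_pos ((dotProduct_self_nonneg x).lt_of_ne' hx))

lemma dotProduct_mulVec_comm_of_forall_trace_le
    (h : ∀ R : Matrix ι ι ℝ, Rᵀ * R = 1 → trace (Rᵀ * S) ≤ trace S) {u v : ι → ℝ}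
    (hu : u ⬝ᵥ u = 1) (hv : v ⬝ᵥ v = 1) (huv : u ⬝ᵥ v = 0) :
    u ⬝ᵥ (S *ᵥ v) = v ⬝ᵥ (S *ᵥ u) := by
  refine sub_eq_zero.mp (eq_zero_of_forall_sq_add_sq_eq_one (a := u ⬝ᵥ (S *ᵥ u) + v ⬝ᵥ (S *ᵥ v))
    fun c s hcs => ?_)
  have hle := h _ (planeRotation_transpose_mul_self hu hv huv hcs)
  rw [trace_transpose_planeRotation_mul] at hle
  linarith

lemma posSemidef_of_forall_trace_le
    (h : ∀ R : Matrix ι ι ℝ, Rᵀ * R = 1 → trace (Rᵀ * S) ≤ trace S) : S.PosSemidef := by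
  refine .of_dotProduct_mulVec_nonneg ?_ fun x => by
    simpa using dotProduct_mulVec_nonneg_of_forall_trace_le h x
  ext i j
  rcases eq_or_ne i j with rfl | hij
  · rfl
  simpa [hij, Ne.symm hij] using
    dotProduct_mulVec_comm_of_forall_trace_le h (u := Pi.single j 1) (v := Pi.single i 1)
      (by simp) (by simp) (by simp [hij])

end MaximalTrace

/-- Lemma C.1 (aligning orthonormal bases via projections):
the minimum of `‖Z − Y Q‖_F` over orthogonal `Q` is at most `‖ZZᵀ − YYᵀ‖_F`.
(The minimum is attained, so we state it as an existence claim.) -/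
theorem stmt2 (n k : ℕ) (Z Y : Matrix (Fin n) (Fin k) ℝ)
    (hZ : Zᵀ * Z = 1) (hY : Yᵀ * Y = 1) :
    ∃ Q : Matrix (Fin k) (Fin k) ℝ, Qᵀ * Q = 1 ∧
      frob (Z - Y * Q) ≤ frob (Z * Zᵀ - Y * Yᵀ) := by
  obtain ⟨Q, hQ, hmax⟩ := exists_transpose_mul_self_eq_one_forall_trace_le (Yᵀ * Z)
  have hYQ : Y * Q * (Y * Q)ᵀ = Y * Yᵀ := by
    rw [transpose_mul, Matrix.mul_assoc, ← Matrix.mul_assoc Q, mul_eq_one_comm.mp hQ,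
      Matrix.one_mul]
  have hS : ((Y * Q)ᵀ * Z).PosSemidef := posSemidef_of_forall_trace_le fun R hR => by
    simpa only [transpose_mul, Matrix.mul_assoc] using
      hmax (Q * R) (transpose_mul_self_mul_eq_one hQ hR)
  refine ⟨Q, hQ, ?_⟩
  simpa only [hYQ] using
    frob_sub_le_frob_mul_transpose_sub hZ (transpose_mul_self_mul_eq_one hY hQ) hS

end
end

section
/- Let X, X̃ ∈ KMM(n,d,k) be two k-means matrices with ‖X − X̃‖_F ≤ ε. Write n_r = n_r(X) and δ_r = δ_r(X). Assume (a) X has exactly k distinct rows, and (b) there exist constants c_r > 0 with c_r + c_ℓ ≤ 1 for all r ≠ ℓ such that c_r^{-2}·ε²/(δ_r²·n_r) < 1 for every r ∈ [k]. Then X̃ has exactly k distinct rows and Mis_r(X; X̃) ≤ c_r^{-2}·ε²/(n_r·δ_r²) for every r ∈ [k]. -/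
open Matrix

noncomputable section

/-- Euclidean distance between two vectors. -/
def dist2 {d : Type*} [Fintype d] (u v : d → ℝ) : ℝ :=
  Real.sqrt (∑ j, (u j - v j) ^ 2)

/-- `X` has at most `k` distinct rows (is a k-means matrix). -/
def IsKMM {n d : ℕ} (k : ℕ) (X : Matrix (Fin n) (Fin d) ℝ) : Prop :=
  ∃ g : Fin n → Fin k, ∀ i i', g i = g i' → X i = X i'

/-- `g` is a labeling consistent with the rows of `X` (same label iff equal rows). -/
def IsLabeling {n d k : ℕ} (X : Matrix (Fin n) (Fin d) ℝ) (g : Fin n → Fin k) : Prop :=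
  ∀ i i', g i = g i' ↔ X i = X i'

/-- center separation `δ_r` of the center enumeration `q` at index `r`. -/
def centerSep {d : Type*} [Fintype d] {k : ℕ} (q : Fin k → d → ℝ) (r : Fin k) : ℝ :=
  sInf {t | ∃ ℓ, ℓ ≠ r ∧ t = dist2 (q ℓ) (q r)}


/-!
Rows of `X` that the perturbation moves by less than `c_r δ_r` are *near* their center. A
Markov-type count bounds the far rows of cluster `r` by `ε² / (c_r δ_r)²`, which by (b) is fewer
than `n_r`, so every cluster has a near row. Since `c_r + c_ℓ ≤ 1`, the perturbed rows of near
rows from different clusters cannot coincide, so `X̃` has `k` distinct rows and its labels can be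
matched with those of `X` through the near rows. Every near row is then labelled correctly, and
the misclassified rows of cluster `r` are among its far rows.
-/

open Function

section Dist2

variable {d : Type*} [Fintype d]

lemma dist2_eq_dist (u v : d → ℝ) :
    dist2 u v = dist (WithLp.toLp 2 u) (WithLp.toLp 2 v) := by
  simp only [dist2, EuclideanSpace.dist_eq, Real.dist_eq, sq_abs]

lemma dist2_comm (u v : d → ℝ) : dist2 u v = dist2 v u := by
  simp only [dist2_eq_dist, dist_comm]

lemma dist2_triangle (u v w : d → ℝ) : dist2 u w ≤ dist2 u v + dist2 v w := by
  simp only [dist2_eq_dist]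
  exact dist_triangle _ _ _

lemma dist2_pos {u v : d → ℝ} (h : u ≠ v) : 0 < dist2 u v := by
  rw [dist2_eq_dist, dist_pos]
  exact fun h' => h (WithLp.toLp_injective 2 h')

lemma frob_sub_sq_eq_sum_dist2_sq {m : Type*} [Fintype m] (X Y : Matrix m d ℝ) :
    frob (X - Y) ^ 2 = ∑ i, dist2 (X i) (Y i) ^ 2 := by
  rw [frob, Real.sq_sqrt (by positivity)]
  refine Finset.sum_congr rfl fun i _ => ?_
  rw [dist2, Real.sq_sqrt (by positivity)]
  rfl

/-- Markov's inequality for the rows of `X - Y`. -/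
lemma ncard_mul_sq_le_frob_sub_sq {m : Type*} [Fintype m] (X Y : Matrix m d ℝ) (s : Set m)
    {t : ℝ} (ht : 0 ≤ t) (h : ∀ i ∈ s, t ≤ dist2 (X i) (Y i)) :
    (s.ncard : ℝ) * t ^ 2 ≤ frob (X - Y) ^ 2 := by
  classical
  rw [frob_sub_sq_eq_sum_dist2_sq, Set.ncard_eq_toFinset_card', ← nsmul_eq_mul]
  calc s.toFinset.card • t ^ 2 ≤ ∑ i ∈ s.toFinset, dist2 (X i) (Y i) ^ 2 :=
        Finset.card_nsmul_le_sum _ _ _ fun i hi =>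
          pow_le_pow_left₀ ht (h i (Set.mem_toFinset.1 hi)) 2
    _ ≤ ∑ i, dist2 (X i) (Y i) ^ 2 :=
        Finset.sum_le_sum_of_subset_of_nonneg (Finset.subset_univ _) fun _ _ _ => by positivity

end Dist2

section CenterSep

variable {d : Type*} [Fintype d] {k : ℕ} {q : Fin k → d → ℝ}

lemma finite_setOf_dist2_centers (r : Fin k) :
    {t | ∃ ℓ, ℓ ≠ r ∧ t = dist2 (q ℓ) (q r)}.Finite :=
  (Set.finite_range fun ℓ => dist2 (q ℓ) (q r)).subset (by rintro _ ⟨ℓ, -, rfl⟩; simp)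

lemma centerSep_le {r ℓ : Fin k} (h : ℓ ≠ r) : centerSep q r ≤ dist2 (q ℓ) (q r) :=
  csInf_le (finite_setOf_dist2_centers r).bddBelow ⟨ℓ, h, rfl⟩

lemma centerSep_pos (hq : Injective q) {r ℓ : Fin k} (h : ℓ ≠ r) : 0 < centerSep q r := by
  obtain ⟨ℓ', hℓ', heq⟩ : centerSep q r ∈ {t | ∃ ℓ, ℓ ≠ r ∧ t = dist2 (q ℓ) (q r)} :=
    Set.Nonempty.csInf_mem ⟨_, ℓ, h, rfl⟩ (finite_setOf_dist2_centers r)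
  rw [heq]
  exact dist2_pos (hq.ne hℓ')

lemma ne_of_dist2_lt_mul_centerSep {c : Fin k → ℝ} {r ℓ : Fin k} (hrℓ : r ≠ ℓ)
    (hr : 0 ≤ c r) (hℓ : 0 ≤ c ℓ) (hsum : c r + c ℓ ≤ 1) {y y' : d → ℝ}
    (hy : dist2 (q r) y < c r * centerSep q r) (hy' : dist2 (q ℓ) y' < c ℓ * centerSep q ℓ) :
    y ≠ y' := by
  rintro rfl
  have hδr : centerSep q r ≤ dist2 (q r) (q ℓ) := dist2_comm (q r) _ ▸ centerSep_le hrℓ.symm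
  have hδℓ : centerSep q ℓ ≤ dist2 (q r) (q ℓ) := centerSep_le hrℓ
  set D := dist2 (q r) (q ℓ)
  have hD : 0 ≤ D := Real.sqrt_nonneg _
  refine lt_irrefl D ?_
  calc D ≤ dist2 (q r) y + dist2 (q ℓ) y := dist2_comm (q ℓ) y ▸ dist2_triangle _ _ _
    _ < c r * centerSep q r + c ℓ * centerSep q ℓ := add_lt_add hy hy'
    _ ≤ c r * D + c ℓ * D := by gcongr
    _ ≤ D := by nlinarith

end CenterSep

section Perturbation

variable {n d : ℕ} {X Xt : Matrix (Fin n) (Fin d) ℝ} {ε c δ : ℝ}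

lemma exists_dist2_lt_of_div_lt_one (hε : frob (X - Xt) ≤ ε) (hc : 0 < c) (hδ : 0 < δ)
    {v : Fin d → ℝ} (hv : ∃ i, X i = v)
    (hb : c⁻¹ ^ 2 * ε ^ 2 / (δ ^ 2 * (Set.ncard {i | X i = v} : ℝ)) < 1) :
    ∃ i, X i = v ∧ dist2 v (Xt i) < c * δ := by
  obtain ⟨i₀, hi₀⟩ := hv
  have hN : 0 < (Set.ncard {i | X i = v} : ℝ) :=
    Nat.cast_pos.2 (Set.ncard_pos (Set.toFinite _) |>.2 ⟨i₀, hi₀⟩)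
  rw [div_lt_one (by positivity)] at hb
  field_simp at hb
  by_contra! hfar
  have hmarkov := ncard_mul_sq_le_frob_sub_sq X Xt {i | X i = v} (by positivity)
    fun i hi => hi ▸ hfar i hi
  have hε2 : frob (X - Xt) ^ 2 ≤ ε ^ 2 := pow_le_pow_left₀ (Real.sqrt_nonneg _) hε 2
  linarith [mul_pow c δ 2]

lemma ncard_div_ncard_le_of_le_dist2 (hε : frob (X - Xt) ≤ ε) (hc : 0 < c) (hδ : 0 < δ)
    (v : Fin d → ℝ) (P : Fin n → Prop) (hP : ∀ i, X i = v → P i → c * δ ≤ dist2 v (Xt i)) :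
    (Set.ncard {i | X i = v ∧ P i} : ℝ) / (Set.ncard {i | X i = v} : ℝ) ≤
      c⁻¹ ^ 2 * ε ^ 2 / ((Set.ncard {i | X i = v} : ℝ) * δ ^ 2) := by
  have hmarkov := ncard_mul_sq_le_frob_sub_sq X Xt {i | X i = v ∧ P i} (by positivity)
    fun i ⟨hi, hPi⟩ => hi ▸ hP i hi hPi
  have hε2 : frob (X - Xt) ^ 2 ≤ ε ^ 2 := pow_le_pow_left₀ (Real.sqrt_nonneg _) hε 2
  rw [mul_comm _ (δ ^ 2), ← div_div]
  gcongr
  rw [le_div_iff₀ (by positivity)]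
  field_simp
  linarith [mul_pow c δ 2]

end Perturbation

lemma IsKMM.exists_labeling {n d k : ℕ} {Xt : Matrix (Fin n) (Fin d) ℝ} (hXt : IsKMM k Xt)
    (p : Fin k → Fin n) (hp : Injective (Xt ∘ p)) :
    ∃ gt : Fin n → Fin k, IsLabeling Xt gt ∧ ∀ i r, gt i = r ↔ Xt i = Xt (p r) := by
  obtain ⟨g, hg⟩ := hXt
  have hgp : Bijective (g ∘ p) :=
    Finite.injective_iff_bijective.1 fun r ℓ h => hp (hg _ _ h)
  set e := Equiv.ofBijective _ hgp
  have hanchor : ∀ i, Xt i = Xt (p (e.symm (g i))) := fun i =>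
    (hg _ _ (e.apply_symm_apply (g i))).symm
  have hiff : ∀ i r, e.symm (g i) = r ↔ Xt i = Xt (p r) := fun i r =>
    ⟨fun h => h ▸ hanchor i, fun h => hp ((hanchor i).symm.trans h)⟩
  refine ⟨fun i => e.symm (g i), fun i i' => ?_, hiff⟩
  rw [hiff, ← hanchor]

theorem stmt3_general (n d k : ℕ)
    (X Xt : Matrix (Fin n) (Fin d) ℝ)
    (hXt : IsKMM k Xt)
    (q : Fin k → Fin d → ℝ) (hq_inj : Function.Injective q)
    -- (a) `X` has exactly `k` distinct rows:
    (hq_surj : ∀ r, ∃ i, X i = q r)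
    (ε : ℝ) (hε : frob (X - Xt) ≤ ε)
    (c : Fin k → ℝ) (hc_pos : ∀ r, 0 < c r)
    (hc_sum : ∀ r ℓ, r ≠ ℓ → c r + c ℓ ≤ 1)
    -- (b)
    (hb : ∀ r, ((c r)⁻¹) ^ 2 * ε ^ 2 /
        ((centerSep q r) ^ 2 * (Set.ncard {i | X i = q r} : ℝ)) < 1) :
    ∃ gt : Fin n → Fin k, IsLabeling Xt gt ∧ Function.Surjective gt ∧
      ∀ r, (Set.ncard {i | X i = q r ∧ gt i ≠ r} : ℝ) / (Set.ncard {i | X i = q r} : ℝ) ≤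
        ((c r)⁻¹) ^ 2 * ε ^ 2 /
          ((Set.ncard {i | X i = q r} : ℝ) * (centerSep q r) ^ 2) := by
  rcases subsingleton_or_nontrivial (Fin k) with hk | hk
  -- for `k ≤ 1` nothing can be misclassified, while `centerSep q r = sInf ∅ = 0`
  · choose p hp using hq_surj
    obtain ⟨gt, hlab, hgt⟩ := hXt.exists_labeling p (injective_of_subsingleton _)
    refine ⟨gt, hlab, fun r => ⟨p r, (hgt _ _).2 rfl⟩, fun r => ?_⟩
    simp only [Subsingleton.elim _ r, ne_eq, not_true_eq_false, and_false, Set.ofPred_false,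
      Set.ncard_empty, Nat.cast_zero, zero_div]
    positivity
  have hδ : ∀ r, 0 < centerSep q r := fun r => centerSep_pos hq_inj (exists_ne r).choose_spec
  choose p _ hp using fun r =>
    exists_dist2_lt_of_div_lt_one hε (hc_pos r) (hδ r) (hq_surj r) (hb r)
  have hsep : ∀ {r ℓ} {i j : Fin n}, r ≠ ℓ → dist2 (q r) (Xt i) < c r * centerSep q r →
      dist2 (q ℓ) (Xt j) < c ℓ * centerSep q ℓ → Xt i ≠ Xt j := fun hrℓ =>
    ne_of_dist2_lt_mul_centerSep hrℓ (hc_pos _).le (hc_pos _).le (hc_sum _ _ hrℓ)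
  obtain ⟨gt, hlab, hgt⟩ := hXt.exists_labeling p fun r ℓ h =>
    by_contra fun hrℓ => hsep hrℓ (hp r) (hp ℓ) h
  refine ⟨gt, hlab, fun r => ⟨p r, (hgt _ _).2 rfl⟩, fun r => ?_⟩
  refine ncard_div_ncard_le_of_le_dist2 hε (hc_pos r) (hδ r) _ _ fun i _ hne =>
    not_lt.1 fun hnear => ?_
  exact hsep (Ne.symm hne) hnear (hp (gt i)) ((hgt i _).1 rfl)

/-- Proposition 3.1: misclassification rate between two close k-means matrices.
The clusters of `X` are enumerated by the injective center map `q`; the conclusion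
exhibits a labeling `gt` of `X̃` (the optimal matching `Q*` of its labels to those of `X`)
which is surjective (i.e. `X̃` has exactly `k` distinct rows) and misclassifies at most a
fraction `c_r⁻² ε² / (n_r δ_r²)` of each cluster `r` of `X`. -/
theorem stmt3 (n d k : ℕ)
    (X Xt : Matrix (Fin n) (Fin d) ℝ)
    (hXt : IsKMM k Xt)
    (q : Fin k → Fin d → ℝ) (hq_inj : Function.Injective q)
    (hq_cov : ∀ i, ∃ r, X i = q r)
    -- (a) `X` has exactly `k` distinct rows:
    (hq_surj : ∀ r, ∃ i, X i = q r)
    (ε : ℝ) (hε : frob (X - Xt) ≤ ε)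
    (c : Fin k → ℝ) (hc_pos : ∀ r, 0 < c r)
    (hc_sum : ∀ r ℓ, r ≠ ℓ → c r + c ℓ ≤ 1)
    -- (b)
    (hb : ∀ r, ((c r)⁻¹) ^ 2 * ε ^ 2 /
        ((centerSep q r) ^ 2 * (Set.ncard {i | X i = q r} : ℝ)) < 1) :
    ∃ gt : Fin n → Fin k, IsLabeling Xt gt ∧ Function.Surjective gt ∧
      ∀ r, (Set.ncard {i | X i = q r ∧ gt i ≠ r} : ℝ) / (Set.ncard {i | X i = q r} : ℝ) ≤
        ((c r)⁻¹) ^ 2 * ε ^ 2 /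
          ((Set.ncard {i | X i = q r} : ℝ) * (centerSep q r) ^ 2) :=
  stmt3_general n d k X Xt hXt q hq_inj hq_surj ε hε c hc_pos hc_sum hb

end
end

section
/- Let A, P ∈ ℝ^{n1×n2} with rank(P) ≤ k, and let M ∈ ℝ^{n1×n2} be a best rank-k approximation of A, i.e., rank(M) ≤ k and ‖M − A‖_op ≤ σ_{k+1}(A), the (k+1)-st largest singular value of A (in particular, any k-truncated SVD of A qualifies). Then ‖M − P‖_F ≤ 2√(2k)·‖A − P‖_op. -/
open Matrix

noncomputable section

/-- ℓ2→ℓ2 operator norm of a real matrix: sup of ‖Mx‖₂ over the ℓ2 unit ball. -/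
def opNorm {m n : Type*} [Fintype m] [Fintype n] (M : Matrix m n ℝ) : ℝ :=
  sSup {t | ∃ x : n → ℝ, ∑ j, (x j) ^ 2 ≤ 1 ∧ t = Real.sqrt (∑ i, (M.mulVec x i) ^ 2)}

/-- `σ_{k+1}(A)`, the (k+1)-st largest singular value of `A`, via the
Eckart–Young–Mirsky characterization: the minimal operator-norm distance from `A`
to matrices of rank at most `k`. -/
def svalSucc {m n : ℕ} (A : Matrix (Fin m) (Fin n) ℝ) (k : ℕ) : ℝ :=
  sInf {t | ∃ N : Matrix (Fin m) (Fin n) ℝ, N.rank ≤ k ∧ t = opNorm (A - N)}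

/-!
Since `σ_{k+1}(A) ≤ ‖A - P‖_op` (as `rank P ≤ k`), the triangle inequality gives
`‖M - P‖_op ≤ 2 ‖A - P‖_op`, and `M - P` has rank at most `2k`. It remains to see that
`‖X‖_F ≤ √(rank X) ‖X‖_op`: summing `‖X e_j‖²` by Parseval in an orthonormal basis `(u_l)` of
the column space of `X` gives `‖X‖_F² = ∑_l ‖Xᵀ u_l‖²`, a sum of `rank X` terms, each at most
`‖X‖_op²`.
-/

open scoped InnerProductSpace Matrix.Norms.L2Operator

section

variable {𝕜 E F : Type*} [RCLike 𝕜] [NormedAddCommGroup E] [InnerProductSpace 𝕜 E]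
  [NormedAddCommGroup F] [InnerProductSpace 𝕜 F]

theorem OrthonormalBasis.sum_sq_norm_inner_eq_sq_norm_of_mem {ι : Type*} [Fintype ι]
    {U : Submodule 𝕜 F} (u : OrthonormalBasis ι 𝕜 U) {y : F} (hy : y ∈ U) :
    ∑ i, ‖⟪(u i : F), y⟫_𝕜‖ ^ 2 = ‖y‖ ^ 2 := by
  simpa only [Submodule.coe_inner, Submodule.coe_norm] using u.sum_sq_norm_inner_right ⟨y, hy⟩

theorem OrthonormalBasis.sum_sq_norm_apply_le [FiniteDimensional 𝕜 E] [CompleteSpace F]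
    {ι : Type*} [Fintype ι] (b : OrthonormalBasis ι 𝕜 E) (f : E →L[𝕜] F) :
    ∑ i, ‖f (b i)‖ ^ 2 ≤ Module.finrank 𝕜 (LinearMap.range (f : E →ₗ[𝕜] F)) * ‖f‖ ^ 2 := by
  have := FiniteDimensional.complete 𝕜 E
  let u := stdOrthonormalBasis 𝕜 (LinearMap.range (f : E →ₗ[𝕜] F))
  calc ∑ i, ‖f (b i)‖ ^ 2
      = ∑ i, ∑ k, ‖⟪(u k : F), f (b i)⟫_𝕜‖ ^ 2 :=
        Finset.sum_congr rfl fun i _ =>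
          (u.sum_sq_norm_inner_eq_sq_norm_of_mem (LinearMap.mem_range_self _ _)).symm
    _ = ∑ k, ∑ i, ‖⟪f.adjoint (u k), b i⟫_𝕜‖ ^ 2 := by
        rw [Finset.sum_comm]
        simp only [ContinuousLinearMap.adjoint_inner_left]
    _ = ∑ k, ‖f.adjoint (u k)‖ ^ 2 := by simp only [b.sum_sq_norm_inner_left]
    _ ≤ ∑ _k : Fin (Module.finrank 𝕜 (LinearMap.range (f : E →ₗ[𝕜] F))), ‖f‖ ^ 2 := by
        gcongr with k
        calc ‖f.adjoint (u k)‖ ≤ ‖f.adjoint‖ * ‖(u k : F)‖ := f.adjoint.le_opNorm _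
          _ = ‖f‖ := by
            rw [ContinuousLinearMap.adjoint.norm_map, Submodule.norm_coe, u.orthonormal.1 k,
              mul_one]
    _ = Module.finrank 𝕜 (LinearMap.range (f : E →ₗ[𝕜] F)) * ‖f‖ ^ 2 := by simp

end

theorem EuclideanSpace.norm_toLp_eq_sqrt {ι : Type*} [Fintype ι] (v : ι → ℝ) :
    ‖WithLp.toLp 2 v‖ = √(∑ i, v i ^ 2) := by
  simp [EuclideanSpace.norm_eq]

section

variable {m n : Type*} [Fintype m] [Fintype n] [DecidableEq n]

theorem Matrix.rank_eq_finrank_range_toEuclideanLin (X : Matrix m n ℝ) :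
    X.rank = Module.finrank ℝ (LinearMap.range (toEuclideanLin X)) := by
  rw [toEuclideanLin_eq_toLin_orthonormal,
    rank_eq_finrank_range_toLin X (EuclideanSpace.basisFun m ℝ).toBasis
      (EuclideanSpace.basisFun n ℝ).toBasis]

theorem opNorm_eq_l2_opNorm (X : Matrix m n ℝ) : opNorm X = ‖X‖ := by
  rw [l2_opNorm_def, ← ContinuousLinearMap.sSup_unitClosedBall_eq_norm, opNorm]
  congr 1
  ext t
  constructor
  · rintro ⟨x, hx, rfl⟩
    refine ⟨WithLp.toLp 2 x, ?_, ?_⟩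
    · rw [Metric.mem_closedBall, dist_zero_right, EuclideanSpace.norm_toLp_eq_sqrt]
      exact Real.sqrt_le_one.mpr hx
    · exact EuclideanSpace.norm_toLp_eq_sqrt _
  · rintro ⟨y, hy, rfl⟩
    refine ⟨WithLp.ofLp y, ?_, ?_⟩
    · rw [Metric.mem_closedBall, dist_zero_right, ← WithLp.toLp_ofLp 2 y,
        EuclideanSpace.norm_toLp_eq_sqrt] at hy
      exact Real.sqrt_le_one.mp hy
    · exact EuclideanSpace.norm_toLp_eq_sqrt (X *ᵥ WithLp.ofLp y)

theorem frob_le_sqrt_rank_mul_l2_opNorm (X : Matrix m n ℝ) : frob X ≤ √X.rank * ‖X‖ := by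
  let f := (toEuclideanLin.trans LinearMap.toContinuousLinearMap) X
  have hcols : ∑ i, ∑ j, X i j ^ 2 = ∑ j, ‖f (EuclideanSpace.basisFun n ℝ j)‖ ^ 2 := by
    rw [Finset.sum_comm]
    refine Finset.sum_congr rfl fun j _ => ?_
    have hcol : f (EuclideanSpace.basisFun n ℝ j) = WithLp.toLp 2 (fun i => X i j) := by
      ext i
      simp [f]
    rw [hcol, EuclideanSpace.norm_toLp_eq_sqrt, Real.sq_sqrt (by positivity)]
  calc frob X = √(∑ j, ‖f (EuclideanSpace.basisFun n ℝ j)‖ ^ 2) := by rw [frob, hcols]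
    _ ≤ √(X.rank * ‖X‖ ^ 2) := by
        gcongr
        rw [X.rank_eq_finrank_range_toEuclideanLin, l2_opNorm_def]
        exact (EuclideanSpace.basisFun n ℝ).sum_sq_norm_apply_le f
    _ = √X.rank * ‖X‖ := by rw [Real.sqrt_mul (Nat.cast_nonneg _), Real.sqrt_sq (norm_nonneg _)]

end

theorem Matrix.rank_add_le {m n K : Type*} [Fintype n] [Field K] (A B : Matrix m n K) :
    (A + B).rank ≤ A.rank + B.rank := by
  have : (A + B).mulVecLin = A.mulVecLin + B.mulVecLin := LinearMap.ext (add_mulVec A B)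
  rw [rank, this]
  exact (Submodule.finrank_mono (LinearMap.range_add_le A.mulVecLin B.mulVecLin))
    |>.trans (Submodule.finrank_add_le_finrank_add_finrank _ _)

theorem Matrix.rank_neg {m n K : Type*} [Fintype n] [Field K] (A : Matrix m n K) :
    (-A).rank = A.rank := by
  have : (-A).mulVecLin = -A.mulVecLin := LinearMap.ext fun v => neg_mulVec v A
  rw [rank, this, LinearMap.range_neg, rank]

theorem Matrix.rank_sub_le {m n K : Type*} [Fintype n] [Field K] (A B : Matrix m n K) :
    (A - B).rank ≤ A.rank + B.rank := by
  simpa only [sub_eq_add_neg, rank_neg] using rank_add_le A (-B)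

theorem svalSucc_le_opNorm_sub {m n k : ℕ} (A : Matrix (Fin m) (Fin n) ℝ)
    {N : Matrix (Fin m) (Fin n) ℝ} (hN : N.rank ≤ k) : svalSucc A k ≤ opNorm (A - N) :=
  csInf_le ⟨0, by rintro _ ⟨N, -, rfl⟩; rw [opNorm_eq_l2_opNorm]; exact norm_nonneg _⟩ ⟨N, hN, rfl⟩

/-- Lemma 5.1: a best rank-k approximation `M` of `A` (i.e. `rank M ≤ k` and
`‖M − A‖_op ≤ σ_{k+1}(A)`) is close in Frobenius norm to any rank-≤k matrix `P`:
`‖M − P‖_F ≤ 2√(2k)·‖A − P‖_op`. -/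
theorem stmt6 (n1 n2 k : ℕ) (A P M : Matrix (Fin n1) (Fin n2) ℝ)
    (hP : P.rank ≤ k) (hMrank : M.rank ≤ k)
    (hM : opNorm (M - A) ≤ svalSucc A k) :
    frob (M - P) ≤ 2 * Real.sqrt (2 * k) * opNorm (A - P) := by
  have hMA : ‖M - A‖ ≤ ‖A - P‖ := by
    simpa only [opNorm_eq_l2_opNorm] using hM.trans (svalSucc_le_opNorm_sub A hP)
  have hMP : ‖M - P‖ ≤ 2 * ‖A - P‖ := by
    calc ‖M - P‖ = ‖(M - A) + (A - P)‖ := by rw [sub_add_sub_cancel]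
      _ ≤ ‖M - A‖ + ‖A - P‖ := norm_add_le _ _
      _ ≤ 2 * ‖A - P‖ := by linarith
  have hrank : ((M - P).rank : ℝ) ≤ 2 * k := by
    exact_mod_cast (M.rank_sub_le P).trans (by omega)
  calc frob (M - P) ≤ √(M - P).rank * ‖M - P‖ := frob_le_sqrt_rank_mul_l2_opNorm _
    _ ≤ √(2 * k) * (2 * ‖A - P‖) := by gcongr
    _ = 2 * Real.sqrt (2 * k) * opNorm (A - P) := by rw [opNorm_eq_l2_opNorm]; ring

end
end
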